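/- arXiv:1109.1349 — 3 statements merged into one kernel-verified Lean document; each statement's English description precedes it below -/
import Mathlib

section
/- A maximally correlated state ρ = Σ_{i,j} c_{ij} |ii⟩⟨jj| on C^d ⊗ C^d is separable if and only if the matrix (c_{ij}) is diagonal, i.e., c_{ij} = 0 for i ≠ j. -/
open Matrix
open scoped ComplexOrder

/-- The rank-one product projector |u⟩⟨u| ⊗ |v⟩⟨v|. -/
noncomputable def prodProj {a b : Type*} (u : a → ℂ) (v : b → ℂ) :
    Matrix (a × b) (a × b) ℂ :=
  fun x y => (u x.1 * v x.2) * star (u y.1 * v y.2)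

/-- ρ is separable: a finite convex combination of pure product states. -/
def SeparableState {a b : Type*} [Fintype a] [Fintype b]
    (ρ : Matrix (a × b) (a × b) ℂ) : Prop :=
  ∃ (n : ℕ) (p : Fin n → ℝ) (u : Fin n → a → ℂ) (v : Fin n → b → ℂ),
    (∀ i, 0 ≤ p i) ∧ (∑ i, p i = 1) ∧
    ρ = ∑ i, (p i : ℂ) • prodProj (u i) (v i)

/-- The maximally correlated state ρ = Σ_{i,j} c_{ij} |ii⟩⟨jj|. -/
noncomputable def maxCorr {d : ℕ} (c : Matrix (Fin d) (Fin d) ℂ) :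
    Matrix (Fin d × Fin d) (Fin d × Fin d) ℂ :=
  fun p q => if p.2 = p.1 ∧ q.2 = q.1 then c p.1 q.1 else 0

namespace SeparableState

variable {a b : Type*} [Fintype a] [Fintype b] {ρ : Matrix (a × b) (a × b) ℂ}

/-- Each product state contributing to `ρ (i, j) (i, j) = 0` has `u i = 0` or `v j = 0`, which
kills its contribution to every entry with row index in `{i} × b` and column index in `a × {j}`. -/
theorem apply_eq_zero_of_apply_self_eq_zero (hρ : SeparableState ρ) {i : a} {j : b}
    (h : ρ (i, j) (i, j) = 0) (i' : a) (j' : b) : ρ (i, j') (i', j) = 0 := by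
  obtain ⟨n, p, u, v, hp, -, rfl⟩ := hρ
  simp only [Matrix.sum_apply, Matrix.smul_apply, prodProj, smul_eq_mul] at h ⊢
  have hterm := (Finset.sum_eq_zero_iff_of_nonneg fun k _ =>
    mul_nonneg (by exact_mod_cast hp k) (mul_star_self_nonneg (u k i * v k j))).mp h
  refine Finset.sum_eq_zero fun k hk => ?_
  rcases mul_eq_zero.mp (hterm k hk) with hpk | huv
  · simp [hpk]
  · rcases mul_eq_zero.mp ((CStarRing.mul_star_self_eq_zero_iff _).mp huv) with hu | hv
    · simp [hu]
    · simp [hv]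

end SeparableState

theorem Matrix.IsHermitian.eq_diagonal_re_of_apply_eq_zero {n : Type*} [DecidableEq n]
    {A : Matrix n n ℂ} (hA : A.IsHermitian) (h : ∀ i j, i ≠ j → A i j = 0) :
    A = diagonal fun i => ((A i i).re : ℂ) := by
  ext i j
  rcases eq_or_ne i j with rfl | hij
  · simpa using (congrFun hA.coe_re_diag i).symm
  · simp [h i j hij, hij]

theorem maxCorr_diagonal {d : ℕ} (w : Fin d → ℂ) :
    maxCorr (diagonal w) =
      ∑ i, w i • prodProj (Pi.single i 1 : Fin d → ℂ) (Pi.single i 1 : Fin d → ℂ) := by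
  ext ⟨x₁, x₂⟩ ⟨y₁, y₂⟩
  rw [Matrix.sum_apply, Finset.sum_eq_single x₁]
  · simp only [maxCorr, diagonal_apply, Matrix.smul_apply, smul_eq_mul, prodProj, Pi.single_apply,
      star_mul', apply_ite star, star_one, star_zero]
    grind
  · simp +contextual [prodProj, Pi.single_apply]
  · simp

theorem separableState_maxCorr_diagonal {d : ℕ} (p : Fin d → ℝ) (hp : ∀ i, 0 ≤ p i)
    (hsum : ∑ i, p i = 1) : SeparableState (maxCorr (diagonal fun i => (p i : ℂ))) :=
  ⟨d, p, _, _, hp, hsum, maxCorr_diagonal _⟩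

/-- A maximally correlated state Σ_{i,j} c_{ij}|ii⟩⟨jj| is separable if and only if the
matrix (c_{ij}) is diagonal. -/
theorem maxCorr_separable_iff_diagonal {d : ℕ}
    (c : Matrix (Fin d) (Fin d) ℂ) (hc : c.PosSemidef) (htr : c.trace = 1) :
    SeparableState (maxCorr c) ↔ ∀ i j, i ≠ j → c i j = 0 := by
  refine ⟨fun hsep i j hij => ?_, fun hdiag => ?_⟩
  · have hoff : maxCorr c (i, j) (i, j) = 0 := by simp [maxCorr, Ne.symm hij]
    simpa [maxCorr] using hsep.apply_eq_zero_of_apply_self_eq_zero hoff j i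
  · rw [hc.isHermitian.eq_diagonal_re_of_apply_eq_zero hdiag]
    refine separableState_maxCorr_diagonal _ (fun i => (Complex.le_def.mp hc.diag_nonneg).1) ?_
    simpa [Matrix.trace, Complex.re_sum] using congrArg Complex.re htr
end

section
/- Let |Ψ⟩ = Σ_i √p_i |i,b_i,i⟩ with {|i⟩} orthonormal and p_i > 0. Then the reduced state ρ_CA = Tr_B |Ψ⟩⟨Ψ| is the maximally correlated state Σ_{i,j} √(p_i p_j) ⟨b_j|b_i⟩ |i,i⟩⟨j,j|, and ρ_CA is separable if and only if the vectors |b_i⟩ are pairwise orthogonal. -/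
open Matrix
open scoped ComplexOrder

/-- For |Ψ⟩ = Σ_i √p_i |i,b_i,i⟩, the reduced state ρ_CA = Tr_B |Ψ⟩⟨Ψ| is the maximally
correlated state Σ_{i,j} √(p_i p_j) ⟨b_j|b_i⟩ |i,i⟩⟨j,j|, and ρ_CA is separable if and
only if the vectors |b_i⟩ are pairwise orthogonal. -/
theorem ghz_like_CA_marginal {d : ℕ} {b : Type*} [Fintype b]
    (p : Fin d → ℝ) (hp : ∀ i, 0 < p i) (hsum : ∑ i, p i = 1)
    (bv : Fin d → b → ℂ) (hb : ∀ i, ∑ x, Complex.normSq (bv i x) = 1)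
    (ψ : Fin d × b × Fin d → ℂ)
    (hψ : ψ = fun q => if q.2.2 = q.1 then (Real.sqrt (p q.1) : ℂ) * bv q.1 q.2.1 else 0)
    (ρCA : Matrix (Fin d × Fin d) (Fin d × Fin d) ℂ)
    (hρCA : ρCA = fun q r => ∑ x : b, ψ (q.2, x, q.1) * star (ψ (r.2, x, r.1))) :
    (ρCA = fun q r =>
      if q.2 = q.1 ∧ r.2 = r.1 then
        ((Real.sqrt (p q.1) * Real.sqrt (p r.1) : ℝ) : ℂ) *
          ∑ x : b, star (bv r.1 x) * bv q.1 x
      else 0) ∧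
    (SeparableState ρCA ↔ ∀ i j, i ≠ j → ∑ x : b, star (bv j x) * bv i x = 0) := by

  have h1 : ρCA = (fun q r =>
      if q.2 = q.1 ∧ r.2 = r.1 then
        ((Real.sqrt (p q.1) * Real.sqrt (p r.1) : ℝ) : ℂ) *
          ∑ x : b, star (bv r.1 x) * bv q.1 x
      else 0) := by
    subst hψ; rw [hρCA]
    funext q r
    rcases q with ⟨q1, q2⟩; rcases r with ⟨r1, r2⟩
    dsimp only
    by_cases hq : q2 = q1 <;> by_cases hr : r2 = r1
    · subst hq; subst hr
      simp only [if_pos rfl, if_pos (⟨rfl, rfl⟩ : q2 = q2 ∧ r2 = r2)]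
      push_cast
      rw [Finset.mul_sum]
      refine Finset.sum_congr rfl fun x _ => ?_
      simp only [star_mul', Complex.star_def, RingHom.map_mul, Complex.conj_ofReal]
      ring
    · rw [if_neg (fun h : q2 = q1 ∧ r2 = r1 => hr h.2)]
      refine Finset.sum_eq_zero fun x _ => ?_
      rw [if_neg (fun h : r1 = r2 => hr h.symm), star_zero, mul_zero]
    · rw [if_neg (fun h : q2 = q1 ∧ r2 = r1 => hq h.1)]
      refine Finset.sum_eq_zero fun x _ => ?_
      rw [if_neg (fun h : q1 = q2 => hq h.symm), zero_mul]
    · rw [if_neg (fun h : q2 = q1 ∧ r2 = r1 => hq h.1)]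
      refine Finset.sum_eq_zero fun x _ => ?_
      rw [if_neg (fun h : q1 = q2 => hq h.symm), zero_mul]
  refine ⟨h1, ?_⟩
  constructor
  · rintro ⟨n, P, u, v, hP, hPsum, hρ⟩ i j hij
    have e1 : ρCA (i, j) (i, j) = 0 := by
      rw [h1]; exact if_neg (fun h => hij (h.1.symm))
    have e2 : ρCA (i, j) (i, j)
        = ((∑ k, P k * Complex.normSq (u k i * v k j) : ℝ) : ℂ) := by
      rw [hρ, Matrix.sum_apply]
      push_cast
      refine Finset.sum_congr rfl fun k _ => ?_
      simp only [Matrix.smul_apply, prodProj, smul_eq_mul]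
      rw [Complex.star_def, Complex.mul_conj]
    have e3 : ∀ k, P k * Complex.normSq (u k i * v k j) = 0 := by
      have h0 : (∑ k, P k * Complex.normSq (u k i * v k j) : ℝ) = 0 := by
        have h' := e2.symm.trans e1
        exact_mod_cast h'
      intro k
      exact (Finset.sum_eq_zero_iff_of_nonneg (fun k _ =>
        mul_nonneg (hP k) (Complex.normSq_nonneg _))).mp h0 k (Finset.mem_univ k)
    have e4 : ρCA (i, i) (j, j) = 0 := by
      rw [hρ, Matrix.sum_apply]
      refine Finset.sum_eq_zero fun k _ => ?_
      simp only [Matrix.smul_apply, prodProj, smul_eq_mul]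
      rcases mul_eq_zero.mp (e3 k) with h | h
      · rw [h]; push_cast; ring
      · rcases mul_eq_zero.mp (Complex.normSq_eq_zero.mp h) with h' | h'
        · rw [h']; ring
        · rw [h', StarMul.star_mul, star_zero]; ring
    have e5 : ρCA (i, i) (j, j)
        = ((Real.sqrt (p i) * Real.sqrt (p j) : ℝ) : ℂ)
            * ∑ x : b, star (bv j x) * bv i x := by
      rw [h1]; exact if_pos ⟨rfl, rfl⟩
    have hne : ((Real.sqrt (p i) * Real.sqrt (p j) : ℝ) : ℂ) ≠ 0 := by
      simp only [ne_eq, Complex.ofReal_eq_zero]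
      exact ne_of_gt (mul_pos (Real.sqrt_pos.mpr (hp i)) (Real.sqrt_pos.mpr (hp j)))
    exact (mul_eq_zero.mp (e5.symm.trans e4)).resolve_left hne
  · intro horth
    refine ⟨d, p, (fun k a => if a = k then 1 else 0),
      (fun k a => if a = k then 1 else 0), fun k => (hp k).le, hsum, ?_⟩
    rw [h1]
    funext q r
    rcases q with ⟨q1, q2⟩; rcases r with ⟨r1, r2⟩
    rw [Matrix.sum_apply]
    have hrhs : ∀ k : Fin d, ((p k : ℂ) • prodProj
        (fun a => if a = k then (1:ℂ) else 0) (fun a => if a = k then (1:ℂ) else 0))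
        (q1, q2) (r1, r2)
        = if q1 = k ∧ q2 = k ∧ r1 = k ∧ r2 = k then (p k : ℂ) else 0 := by
      intro k
      simp only [Matrix.smul_apply, prodProj, smul_eq_mul]
      by_cases c1 : q1 = k <;> by_cases c2 : q2 = k <;> by_cases c3 : r1 = k <;>
        by_cases c4 : r2 = k <;> simp [c1, c2, c3, c4]
    rw [Finset.sum_congr rfl fun k _ => hrhs k]
    dsimp only
    by_cases hq : q2 = q1 <;> by_cases hr : r2 = r1
    · subst hq; subst hr
      rw [if_pos ⟨rfl, rfl⟩]
      by_cases hqr : q2 = r2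
      · subst hqr
        have hsumval : (∑ k : Fin d, if q2 = k ∧ q2 = k ∧ q2 = k ∧ q2 = k
            then (p k : ℂ) else 0) = (p q2 : ℂ) := by
          rw [Finset.sum_eq_single q2]
          · simp
          · intro k _ hk
            refine if_neg ?_
            rintro ⟨hc, -⟩; exact hk hc.symm
          · intro h; exact absurd (Finset.mem_univ q2) h
        rw [hsumval]
        have hinner : (∑ x : b, star (bv q2 x) * bv q2 x)
            = ((∑ x : b, Complex.normSq (bv q2 x) : ℝ) : ℂ) := by
          push_cast
          refine Finset.sum_congr rfl fun x _ => ?_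
          rw [Complex.star_def, Complex.normSq_eq_conj_mul_self]
        rw [hinner, hb q2, Real.mul_self_sqrt (hp q2).le]
        simp
      · rw [horth q2 r2 hqr, mul_zero]
        refine (Finset.sum_eq_zero fun k _ => ?_).symm
        refine if_neg ?_
        rintro ⟨hc1, -, hc3, -⟩; exact hqr (hc1.trans hc3.symm)
    · rw [if_neg (fun h : q2 = q1 ∧ r2 = r1 => hr h.2)]
      refine (Finset.sum_eq_zero fun k _ => ?_).symm
      refine if_neg ?_
      rintro ⟨-, -, hc3, hc4⟩; exact hr (hc4.trans hc3.symm)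
    · rw [if_neg (fun h : q2 = q1 ∧ r2 = r1 => hq h.1)]
      refine (Finset.sum_eq_zero fun k _ => ?_).symm
      refine if_neg ?_
      rintro ⟨hc1, hc2, -, -⟩; exact hq (hc2.trans hc1.symm)
    · rw [if_neg (fun h : q2 = q1 ∧ r2 = r1 => hq h.1)]
      refine (Finset.sum_eq_zero fun k _ => ?_).symm
      refine if_neg ?_
      rintro ⟨hc1, hc2, -, -⟩; exact hq (hc2.trans hc1.symm)
end

section
/- For the tripartite pure state |Ψ⟩ ∝ |000⟩ + (|0⟩+|1⟩)|11⟩ on C^2 ⊗ C^2 ⊗ C^2, the reduced state ρ_AB = Tr_C |Ψ⟩⟨Ψ| is separable, but the reduced state ρ_BC is entangled (its partial transpose is not positive semidefinite). -/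
/-! Peres criterion: the partial transpose of a product projector |u⟩⟨u| ⊗ |v⟩⟨v| is the product
projector |u⟩⟨u| ⊗ |v̄⟩⟨v̄|, so the partial transpose of a separable state is a nonnegative
combination of positive semidefinite matrices. For ρ_BC it fails on the singlet |01⟩ - |10⟩,
while ρ_AB is explicitly a mixture of two product states. -/

open Matrix
open scoped ComplexOrder

/-- Partial transpose with respect to the second factor. -/
def ptranspose2 {a b : Type*} [Fintype a] [Fintype b]
    (ρ : Matrix (a × b) (a × b) ℂ) : Matrix (a × b) (a × b) ℂ :=
  fun p q => ρ (p.1, q.2) (q.1, p.2)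

section PartialTranspose

variable {a b : Type*}

lemma ptranspose2_smul [Fintype a] [Fintype b] (c : ℂ) (ρ : Matrix (a × b) (a × b) ℂ) :
    ptranspose2 (c • ρ) = c • ptranspose2 ρ :=
  rfl

lemma ptranspose2_sum [Fintype a] [Fintype b] {ι : Type*} (s : Finset ι)
    (ρ : ι → Matrix (a × b) (a × b) ℂ) :
    ptranspose2 (∑ i ∈ s, ρ i) = ∑ i ∈ s, ptranspose2 (ρ i) := by
  ext p q
  simp only [ptranspose2, Matrix.sum_apply]

lemma prodProj_eq_vecMulVec (u : a → ℂ) (v : b → ℂ) :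
    prodProj u v = vecMulVec (fun x => u x.1 * v x.2) (star fun x => u x.1 * v x.2) :=
  rfl

lemma posSemidef_prodProj [Finite a] [Finite b] (u : a → ℂ) (v : b → ℂ) :
    (prodProj u v).PosSemidef := by
  rw [prodProj_eq_vecMulVec]
  exact posSemidef_vecMulVec_self_star _

lemma ptranspose2_prodProj [Fintype a] [Fintype b] (u : a → ℂ) (v : b → ℂ) :
    ptranspose2 (prodProj u v) = prodProj u (star v) := by
  ext p q
  simp only [ptranspose2, prodProj, Pi.star_apply, star_mul', star_star]
  ring

theorem SeparableState.posSemidef_ptranspose2 [Fintype a] [Fintype b]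
    {ρ : Matrix (a × b) (a × b) ℂ} (h : SeparableState ρ) : (ptranspose2 ρ).PosSemidef := by
  obtain ⟨n, p, u, v, hp, -, rfl⟩ := h
  rw [ptranspose2_sum]
  refine posSemidef_sum _ fun i _ => ?_
  rw [ptranspose2_smul, ptranspose2_prodProj]
  exact (posSemidef_prodProj _ _).smul (by exact_mod_cast hp i)

lemma separableState_of_two [Fintype a] [Fintype b] {p q : ℝ} (hp : 0 ≤ p) (hq : 0 ≤ q)
    (hpq : p + q = 1) (u u' : a → ℂ) (v v' : b → ℂ) :
    SeparableState ((p : ℂ) • prodProj u v + (q : ℂ) • prodProj u' v') :=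
  ⟨2, ![p, q], ![u, u'], ![v, v'], fun i => by fin_cases i <;> assumption,
    by simpa [Fin.sum_univ_two] using hpq, by simp [Fin.sum_univ_two]⟩

end PartialTranspose

section Example

noncomputable def ψ₀ : Fin 2 × Fin 2 × Fin 2 → ℂ := fun q =>
  if q = (0, 0, 0) ∨ q = (0, 1, 1) ∨ q = (1, 1, 1) then ((1 / Real.sqrt 3 : ℝ) : ℂ) else 0

def reducedAB (ψ : Fin 2 × Fin 2 × Fin 2 → ℂ) : Matrix (Fin 2 × Fin 2) (Fin 2 × Fin 2) ℂ :=
  fun q r => ∑ k : Fin 2, ψ (q.1, q.2, k) * star (ψ (r.1, r.2, k))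

def reducedBC (ψ : Fin 2 × Fin 2 × Fin 2 → ℂ) : Matrix (Fin 2 × Fin 2) (Fin 2 × Fin 2) ℂ :=
  fun q r => ∑ i : Fin 2, ψ (i, q.1, q.2) * star (ψ (i, r.1, r.2))

lemma inv_ofReal_sqrt_mul_self {x : ℝ} (hx : 0 ≤ x) :
    ((Real.sqrt x : ℝ) : ℂ)⁻¹ * ((Real.sqrt x : ℝ) : ℂ)⁻¹ = (x : ℂ)⁻¹ := by
  rw [← mul_inv, ← Complex.ofReal_mul, Real.mul_self_sqrt hx]

-- ρ_AB = (1/3)|00⟩⟨00| + (1/3)(|0⟩ + |1⟩)(⟨0| + ⟨1|) ⊗ |1⟩⟨1|, with the second term normalized.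
lemma reducedAB_ψ₀ :
    reducedAB ψ₀ = ((1 / 3 : ℝ) : ℂ) • prodProj (Pi.single 0 1) (Pi.single 0 1)
      + ((2 / 3 : ℝ) : ℂ) • prodProj (fun _ => ((1 / Real.sqrt 2 : ℝ) : ℂ)) (Pi.single 1 1) := by
  ext q r
  fin_cases q <;> fin_cases r <;>
    norm_num [reducedAB, ψ₀, prodProj, Complex.conj_ofReal, inv_ofReal_sqrt_mul_self]

-- ρ_BC = (1/3)(|00⟩ + |11⟩)(⟨00| + ⟨11|) + (1/3)|11⟩⟨11|; the partial transpose turns the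
-- coherence |00⟩⟨11| into |01⟩⟨10|, which the singlet |01⟩ - |10⟩ detects.
lemma dotProduct_ptranspose2_reducedBC_ψ₀_singlet :
    star (Pi.single (0, 1) 1 - Pi.single (1, 0) 1 : Fin 2 × Fin 2 → ℂ) ⬝ᵥ
      ptranspose2 (reducedBC ψ₀) *ᵥ (Pi.single (0, 1) 1 - Pi.single (1, 0) 1) = -2 / 3 := by
  norm_num [reducedBC, ψ₀, ptranspose2, dotProduct, mulVec, Fintype.sum_prod_type,
    Complex.conj_ofReal, inv_ofReal_sqrt_mul_self]

lemma not_posSemidef_ptranspose2_reducedBC_ψ₀ : ¬ (ptranspose2 (reducedBC ψ₀)).PosSemidef := by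
  intro h
  have hsinglet := h.dotProduct_mulVec_nonneg (Pi.single (0, 1) 1 - Pi.single (1, 0) 1)
  rw [dotProduct_ptranspose2_reducedBC_ψ₀_singlet] at hsinglet
  norm_num [Complex.le_def] at hsinglet

end Example

/-- For |Ψ⟩ = (1/√3)(|000⟩ + |011⟩ + |111⟩), the reduced state ρ_AB is separable but
ρ_BC is entangled: its partial transpose is not positive semidefinite. -/
theorem counterexample_converse
    (ψ : Fin 2 × Fin 2 × Fin 2 → ℂ)
    (hψ : ψ = fun q =>
      if q = (0, 0, 0) ∨ q = (0, 1, 1) ∨ q = (1, 1, 1)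
      then ((1 / Real.sqrt 3 : ℝ) : ℂ) else 0)
    (ρAB : Matrix (Fin 2 × Fin 2) (Fin 2 × Fin 2) ℂ)
    (hρAB : ρAB = fun q r => ∑ k : Fin 2, ψ (q.1, q.2, k) * star (ψ (r.1, r.2, k)))
    (ρBC : Matrix (Fin 2 × Fin 2) (Fin 2 × Fin 2) ℂ)
    (hρBC : ρBC = fun q r => ∑ i : Fin 2, ψ (i, q.1, q.2) * star (ψ (i, r.1, r.2))) :
    SeparableState ρAB ∧ ¬ SeparableState ρBC ∧ ¬ (ptranspose2 ρBC).PosSemidef := by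
  obtain rfl : ψ = ψ₀ := hψ
  obtain rfl : ρAB = reducedAB ψ₀ := hρAB
  obtain rfl : ρBC = reducedBC ψ₀ := hρBC
  refine ⟨?_, fun h => not_posSemidef_ptranspose2_reducedBC_ψ₀ h.posSemidef_ptranspose2,
    not_posSemidef_ptranspose2_reducedBC_ψ₀⟩
  rw [reducedAB_ψ₀]
  exact separableState_of_two (by norm_num) (by norm_num) (by norm_num) _ _ _ _
end
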